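/- The maximal Lyapunov exponent λ := max_{1≤j≤d} limsup_{T→∞} (1/T) ∫_0^T A_{u(t)}^{jj}(t) dt satisfies λ ≤ χ for every Δ-sequence {n_s}, i.e., the maximal Lyapunov exponent of the linear switched system is bounded above by each of its Liao-type exponents. -/

import Mathlib

/-!
Fix a diagonal entry `f(t) = A_{u(t)}^{jj}(t)`. Its primitive `F(T) = ∫₀ᵀ f` vanishes at `0` and
is `α`-Lipschitz on `[0, ∞)`. Consecutive block endpoints `b_s = τ_{n_s}` are at most `Δ T*`
apart, so for `T ∈ [b_s, b_{s+1})` the averages `F(T)/T` and `F(b_s)/b_s` differ by `O(1/T)`,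
and the limsup over `T → ∞` is at most the limsup along the blocks. Splitting `F(b_s)` into the
integrals over the blocks and bounding each one by the maximum over all diagonal entries gives
`F(b_s)/b_s ≤` the `s`-th Liao average, whose limsup is `χ`.
-/

/-- Matrix acting on `EuclideanSpace ℝ (Fin d)` by matrix-vector multiplication. -/
noncomputable def mulVecE {d : ℕ} (M : Matrix (Fin d) (Fin d) ℝ)
    (v : EuclideanSpace ℝ (Fin d)) : EuclideanSpace ℝ (Fin d) :=
  (EuclideanSpace.equiv (Fin d) ℝ).symm (M.mulVec (EuclideanSpace.equiv (Fin d) ℝ v))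

open Filter MeasureTheory Set Finset

theorem exists_le_lt_succ_of_tendsto_atTop {b : ℕ → ℝ}
    (hbtop : Tendsto b atTop atTop) {T : ℝ} (hT : b 0 ≤ T) :
    ∃ s, b s ≤ T ∧ T < b (s + 1) := by
  classical
  have hex : ∃ m, T < b m := (hbtop.eventually_gt_atTop T).exists
  obtain ⟨s, hs⟩ : ∃ s, Nat.find hex = s + 1 :=
    Nat.exists_eq_succ_of_ne_zero fun h => (Nat.find_spec hex).not_ge (h ▸ hT)
  exact ⟨s, not_lt.1 (Nat.find_min hex (by omega)), hs ▸ Nat.find_spec hex⟩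

theorem sub_le_mul_of_succ_sub_le {a : ℕ → ℝ} {c : ℝ} (h : ∀ n, a (n + 1) - a n ≤ c)
    (m k : ℕ) : a (m + k) - a m ≤ k * c := by
  induction k with
  | zero => simp
  | succ k ih =>
    rw [← add_assoc]
    push_cast
    linarith [h (m + k)]

section Lipschitz

variable {F : ℝ → ℝ} {L : ℝ}

theorem abs_div_le_of_abs_sub_le (hF0 : F 0 = 0)
    (hF : ∀ S T, 0 ≤ S → S ≤ T → |F T - F S| ≤ L * (T - S)) {T : ℝ} (hT : 0 < T) :
    |F T / T| ≤ L := by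
  rw [abs_div, abs_of_pos hT, div_le_iff₀ hT]
  simpa [hF0] using hF 0 T le_rfl hT.le

theorem div_le_div_add_of_abs_sub_le (hF0 : F 0 = 0)
    (hF : ∀ S T, 0 ≤ S → S ≤ T → |F T - F S| ≤ L * (T - S)) {S T C : ℝ}
    (hS : 0 < S) (hST : S ≤ T) (hC : T - S ≤ C) :
    F T / T ≤ F S / S + 2 * L * C / T := by
  have hT : 0 < T := hS.trans_le hST
  have hL : 0 ≤ L := by simpa using (abs_nonneg _).trans (hF 0 1 le_rfl zero_le_one)
  have hFS : |F S| ≤ L * S := by simpa [hF0] using hF 0 S le_rfl hS.le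
  have hstep : F T - F S ≤ L * C :=
    (le_abs_self _).trans ((hF S T hS.le hST).trans (mul_le_mul_of_nonneg_left hC hL))
  -- `F S / T` differs from `F S / S` by `F S (S - T) / (S T)`, which is at most `L C / T`
  have hrescale : F S / T ≤ F S / S + L * C / T := by
    have hdefect : -(S * (L * C)) ≤ F S * (T - S) := by
      nlinarith [neg_abs_le (F S), mul_le_mul_of_nonneg_left hC (mul_nonneg hL hS.le)]
    rw [div_add_div _ _ hS.ne' hT.ne', div_le_div_iff₀ hT (by positivity)]
    nlinarith [mul_le_mul_of_nonneg_left hdefect hT.le]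
  calc F T / T = (F T - F S) / T + F S / T := by ring
    _ ≤ L * C / T + (F S / S + L * C / T) := by gcongr
    _ = F S / S + 2 * L * C / T := by ring

theorem limsup_div_le_limsup_div_comp (hF0 : F 0 = 0)
    (hF : ∀ S T, 0 ≤ S → S ≤ T → |F T - F S| ≤ L * (T - S)) {b : ℕ → ℝ} {C : ℝ}
    (hb : Monotone b) (hbtop : Tendsto b atTop atTop) (hgap : ∀ s, b (s + 1) - b s ≤ C) :
    limsup (fun T => F T / T) atTop ≤ limsup (fun s => F (b s) / b s) atTop := by
  have hbpos : ∀ᶠ s in atTop, 0 < b s := hbtop.eventually_gt_atTop 0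
  have hbdd : IsBoundedUnder (· ≤ ·) atTop (fun s => F (b s) / b s) :=
    isBoundedUnder_of_eventually_le (hbpos.mono fun s hs =>
      (le_abs_self _).trans (abs_div_le_of_abs_sub_le hF0 hF hs))
  have hcobdd : IsCoboundedUnder (· ≤ ·) atTop (fun T => F T / T) :=
    isCoboundedUnder_le_of_eventually_le atTop (x := -L) ((eventually_gt_atTop 0).mono
      fun T hT => neg_le_of_abs_le (abs_div_le_of_abs_sub_le hF0 hF hT))
  refine le_of_forall_pos_le_add fun ε hε => limsup_le_of_le hcobdd ?_
  obtain ⟨S, hS⟩ := eventually_atTop.1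
    (hbpos.and (eventually_lt_of_limsup_lt (lt_add_of_pos_right _ (half_pos hε)) hbdd))
  filter_upwards [eventually_ge_atTop (b S), eventually_gt_atTop 0,
    eventually_ge_atTop (4 * L * C / ε)] with T hTS hT hTε
  obtain ⟨s, hsT, hTs⟩ := exists_le_lt_succ_of_tendsto_atTop hbtop ((hb (Nat.zero_le S)).trans hTS)
  have hSs : S ≤ s := Nat.lt_succ_iff.1 (hb.reflect_lt (hTS.trans_lt hTs))
  obtain ⟨hbs, hlt⟩ := hS s hSs
  have herr : 2 * L * C / T ≤ ε / 2 := by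
    rw [div_le_iff₀ hT]
    rw [div_le_iff₀ hε] at hTε
    linarith
  calc F T / T ≤ F (b s) / b s + 2 * L * C / T :=
        div_le_div_add_of_abs_sub_le hF0 hF hbs hsT (by linarith [hgap s])
    _ ≤ _ := by linarith

end Lipschitz

section Blocks

variable {ι : Type*} {f : ι → ℝ → ℝ} {b : ℕ → ℝ}

theorem integral_le_sum_iSup_integral [Finite ι] (j : ι) {s : ℕ}
    (hf : ∀ k < s, IntervalIntegrable (f j) volume (b k) (b (k + 1))) :
    ∫ t in b 0..b s, f j t ≤ ∑ k ∈ range s, ⨆ i, ∫ t in b k..b (k + 1), f i t := by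
  rw [← intervalIntegral.sum_integral_adjacent_intervals hf]
  exact sum_le_sum fun k _ =>
    le_ciSup (f := fun i => ∫ t in b k..b (k + 1), f i t) (Set.finite_range _).bddAbove j

theorem sum_iSup_integral_le [Nonempty ι] {L : ℝ} (hb : Monotone b)
    (hf : ∀ i, ∀ t > b 0, |f i t| ≤ L) (s : ℕ) :
    ∑ k ∈ range s, ⨆ i, ∫ t in b k..b (k + 1), f i t ≤ L * (b s - b 0) := by
  rw [← sum_range_sub, mul_sum]
  refine sum_le_sum fun k _ => ciSup_le fun i => ?_
  have hlen : 0 ≤ b (k + 1) - b k := sub_nonneg.2 (hb k.le_succ)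
  calc ∫ t in b k..b (k + 1), f i t ≤ ‖∫ t in b k..b (k + 1), f i t‖ := le_abs_self _
    _ ≤ L * |b (k + 1) - b k| := intervalIntegral.norm_integral_le_of_norm_le_const
        fun t ht => hf i t ((hb k.zero_le).trans_lt (uIoc_of_le (hb k.le_succ) ▸ ht).1)
    _ = L * (b (k + 1) - b k) := by rw [abs_of_nonneg hlen]

theorem limsup_average_le_limsup_blockAverage [Finite ι] [Nonempty ι] {L C : ℝ}
    (hbound : ∀ i, ∀ t > 0, |f i t| ≤ L)
    (hint : ∀ i T, 0 ≤ T → IntervalIntegrable (f i) volume 0 T)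
    (hb0 : b 0 = 0) (hb : Monotone b) (hbtop : Tendsto b atTop atTop)
    (hgap : ∀ s, b (s + 1) - b s ≤ C) (j : ι) :
    limsup (fun T => 1 / T * ∫ t in (0 : ℝ)..T, f j t) atTop ≤
      limsup (fun s => (b s)⁻¹ * ∑ k ∈ range s, ⨆ i, ∫ t in b k..b (k + 1), f i t) atTop := by
  set F : ℝ → ℝ := fun T => ∫ t in (0 : ℝ)..T, f j t
  have hb_nonneg : ∀ s, 0 ≤ b s := fun s => hb0 ▸ hb s.zero_le
  have hF : ∀ S T, 0 ≤ S → S ≤ T → |F T - F S| ≤ L * (T - S) := fun S T hS hST => by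
    rw [intervalIntegral.integral_interval_sub_left (hint j T (hS.trans hST)) (hint j S hS),
      ← abs_of_nonneg (sub_nonneg.2 hST)]
    exact intervalIntegral.norm_integral_le_of_norm_le_const
      fun t ht => (Real.norm_eq_abs _).trans_le
        (hbound j t (hS.trans_lt (uIoc_of_le hST ▸ ht).1))
  have hbpos : ∀ᶠ s in atTop, 0 < b s := hbtop.eventually_gt_atTop 0
  calc limsup (fun T => 1 / T * F T) atTop = limsup (fun T => F T / T) atTop := by
        simp only [one_div, inv_mul_eq_div]
    _ ≤ limsup (fun s => F (b s) / b s) atTop :=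
        limsup_div_le_limsup_div_comp (by simp [F]) hF hb hbtop hgap
    _ ≤ _ := by
      refine limsup_le_limsup (hbpos.mono fun s hs => ?_) ?_ ?_
      · dsimp only
        rw [div_eq_inv_mul]
        refine mul_le_mul_of_nonneg_left ?_ (inv_nonneg.2 hs.le)
        simpa [F, hb0] using integral_le_sum_iSup_integral j fun k _ =>
          (hint j (b k) (hb_nonneg k)).symm.trans (hint j (b (k + 1)) (hb_nonneg _))
      · exact isCoboundedUnder_le_of_eventually_le atTop (x := -L) (hbpos.mono fun s hs =>
          neg_le_of_abs_le (abs_div_le_of_abs_sub_le (by simp [F]) hF hs))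
      · refine isBoundedUnder_of_eventually_le (a := L) (hbpos.mono fun s hs => ?_)
        rw [inv_mul_le_iff₀ hs, mul_comm]
        simpa [hb0] using sum_iSup_integral_le hb (hb0 ▸ hbound) s

end Blocks

theorem intervalIntegrable_of_eqOn_Ioc {f g : ℝ → ℝ} {a b M : ℝ} (hab : a ≤ b)
    (hfg : EqOn f g (Ioc a b)) (hg : ContinuousOn g (Ioc a b))
    (hgM : ∀ t ∈ Ioc a b, |g t| ≤ M) : IntervalIntegrable f volume a b := by
  rw [intervalIntegrable_iff_integrableOn_Ioc_of_le hab]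
  refine IntegrableOn.congr_fun ?_ hfg.symm measurableSet_Ioc
  exact Integrable.mono' (g := fun _ => M) (integrableOn_const measure_Ioc_lt_top.ne)
    (hg.aestronglyMeasurable measurableSet_Ioc)
    ((ae_restrict_mem measurableSet_Ioc).mono fun t ht =>
      (Real.norm_eq_abs _).trans_le (hgM t ht))

section SwitchedSystem

variable {d : ℕ} {I : Type*} {A : I → ℝ → Matrix (Fin d) (Fin d) ℝ} {α : ℝ}

theorem abs_apply_le_of_norm_mulVecE_le {M : Matrix (Fin d) (Fin d) ℝ}
    (hM : ∀ v, ‖mulVecE M v‖ ≤ α * ‖v‖) (i j : Fin d) : |M i j| ≤ α := by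
  have hcol : mulVecE M (EuclideanSpace.single j 1) i = M i j := by
    simp [mulVecE, Matrix.mulVec, dotProduct]
  simpa [hcol] using (PiLp.norm_apply_le (mulVecE M (EuclideanSpace.single j 1)) i).trans
    (hM (EuclideanSpace.single j 1))

theorem intervalIntegrable_switched_diag
    (hAcont : ∀ i, ContinuousOn (A i) (Ioi 0))
    (hAnorm : ∀ i, ∀ t > (0 : ℝ), ∀ v, ‖mulVecE (A i t) v‖ ≤ α * ‖v‖)
    {τ : ℕ → ℝ} (hτ0 : τ 0 = 0) (hτ : Monotone τ) (hτtop : Tendsto τ atTop atTop)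
    {σ : ℕ → I} {u : ℝ → I} (hu : ∀ n, ∀ t ∈ Ioc (τ n) (τ (n + 1)), u t = σ (n + 1))
    (j : Fin d) {T : ℝ} (hT : 0 ≤ T) :
    IntervalIntegrable (fun t => A (u t) t j j) volume 0 T := by
  obtain ⟨N, hN⟩ := (hτtop.eventually_ge_atTop T).exists
  have hpieces : ∀ n < N, IntervalIntegrable (fun t => A (u t) t j j) volume (τ n) (τ (n + 1)) :=
    fun n _ => by
      have hpos : Ioc (τ n) (τ (n + 1)) ⊆ Ioi 0 := fun t ht => (hτ0 ▸ hτ n.zero_le).trans_lt ht.1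
      exact intervalIntegrable_of_eqOn_Ioc (g := fun t => A (σ (n + 1)) t j j) (hτ n.le_succ)
        (fun t ht => by simp only [hu n t ht])
        (((continuous_id.matrix_elem j j).comp_continuousOn (hAcont _)).mono hpos)
        fun t ht => abs_apply_le_of_norm_mulVecE_le (hAnorm _ t (hpos ht)) j j
  refine (IntervalIntegrable.trans_iterate hpieces).mono_set ?_
  rw [hτ0]
  exact uIcc_subset_uIcc_left (by rw [uIcc_of_le (hT.trans hN)]; exact ⟨hT, hN⟩)

end SwitchedSystem

theorem stmt2_general
    {d : ℕ} (hd : 2 ≤ d) {I : Type*}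
    (A : I → ℝ → Matrix (Fin d) (Fin d) ℝ)
    (α Tstar : ℝ)
    (hAcont : ∀ i, ContinuousOn (A i) (Set.Ioi (0:ℝ)))
    (hAnorm : ∀ i, ∀ t > (0:ℝ), ∀ v : EuclideanSpace ℝ (Fin d),
      ‖mulVecE (A i t) v‖ ≤ α * ‖v‖)
    (τ : ℕ → ℝ) (hτ0 : τ 0 = 0) (hτmono : StrictMono τ)
    (hτtop : Filter.Tendsto τ Filter.atTop Filter.atTop)
    (hτgap : ∀ n : ℕ, τ (n+1) - τ n ≤ Tstar)
    (σ : ℕ → I) (u : ℝ → I)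
    (hu : ∀ n : ℕ, ∀ t ∈ Set.Ioc (τ n) (τ (n+1)), u t = σ (n+1))
    (Δ : ℕ)
    (nseq : ℕ → ℕ) (hn0 : nseq 0 = 0) (hnmono : StrictMono nseq)
    (hngap : ∀ s : ℕ, nseq (s+1) - nseq s ≤ Δ)
    (lam χ : ℝ)
    (hlam : lam = ⨆ j : Fin d, Filter.limsup
        (fun T : ℝ => (1 / T) * ∫ t in (0:ℝ)..T, A (u t) t j j) Filter.atTop)
    (hχ : χ = Filter.limsup (fun s : ℕ =>
        (τ (nseq s))⁻¹ * ∑ k ∈ Finset.range s, ⨆ j : Fin d,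
          ∫ t in (τ (nseq k))..(τ (nseq (k+1))), A (u t) t j j) Filter.atTop) :
    lam ≤ χ := by
  have : Nonempty (Fin d) := ⟨⟨0, by omega⟩⟩
  have hτ : Monotone τ := hτmono.monotone
  have hTstar : 0 ≤ Tstar := (sub_pos.2 (hτmono Nat.zero_lt_one)).le.trans (hτgap 0)
  have hgap : ∀ s, τ (nseq (s + 1)) - τ (nseq s) ≤ Δ * Tstar := fun s => by
    have h := sub_le_mul_of_succ_sub_le hτgap (nseq s) (nseq (s + 1) - nseq s)
    rw [Nat.add_sub_cancel' (hnmono s.lt_succ_self).le] at h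
    exact h.trans (mul_le_mul_of_nonneg_right (by exact_mod_cast hngap s) hTstar)
  rw [hlam, hχ]
  exact ciSup_le fun j => limsup_average_le_limsup_blockAverage
    (f := fun i t => A (u t) t i i) (b := fun s => τ (nseq s))
    (fun i t ht => abs_apply_le_of_norm_mulVecE_le (hAnorm _ t ht) i i)
    (fun i _ hT => intervalIntegrable_switched_diag hAcont hAnorm hτ0 hτ hτtop hu i hT)
    (by simp only [hn0, hτ0]) (hτ.comp hnmono.monotone) (hτtop.comp hnmono.tendsto_atTop) hgap j

/-- the maximal Lyapunov exponent `λ` of the linear switched system is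
bounded above by every Liao-type exponent `χ` (one for each Δ-sequence). -/
theorem stmt2
    {d : ℕ} (hd : 2 ≤ d) {I : Type*}
    (A : I → ℝ → Matrix (Fin d) (Fin d) ℝ)
    (α Tstar : ℝ) (hα : 0 < α) (hT : 0 < Tstar)
    (hAcont : ∀ i, ContinuousOn (A i) (Set.Ioi (0:ℝ)))
    (hAnorm : ∀ i, ∀ t > (0:ℝ), ∀ v : EuclideanSpace ℝ (Fin d),
      ‖mulVecE (A i t) v‖ ≤ α * ‖v‖)
    (τ : ℕ → ℝ) (hτ0 : τ 0 = 0) (hτmono : StrictMono τ)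
    (hτtop : Filter.Tendsto τ Filter.atTop Filter.atTop)
    (hτgap : ∀ n : ℕ, τ (n+1) - τ n ≤ Tstar)
    (σ : ℕ → I) (u : ℝ → I)
    (hu : ∀ n : ℕ, ∀ t ∈ Set.Ioc (τ n) (τ (n+1)), u t = σ (n+1))
    (Δ : ℕ) (hΔ : 0 < Δ)
    (nseq : ℕ → ℕ) (hn0 : nseq 0 = 0) (hnmono : StrictMono nseq)
    (hngap : ∀ s : ℕ, nseq (s+1) - nseq s ≤ Δ)
    (lam χ : ℝ)
    (hlam : lam = ⨆ j : Fin d, Filter.limsup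
        (fun T : ℝ => (1 / T) * ∫ t in (0:ℝ)..T, A (u t) t j j) Filter.atTop)
    (hχ : χ = Filter.limsup (fun s : ℕ =>
        (τ (nseq s))⁻¹ * ∑ k ∈ Finset.range s, ⨆ j : Fin d,
          ∫ t in (τ (nseq k))..(τ (nseq (k+1))), A (u t) t j j) Filter.atTop) :
    lam ≤ χ :=
  stmt2_general hd A α Tstar hAcont hAnorm τ hτ0 hτmono hτtop hτgap σ u hu Δ nseq hn0 hnmono hngap
    lam χ hlam hχ
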